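/- arXiv:1503.05238 — 2 statements merged into one kernel-verified Lean document; each statement's English description precedes it below -/
import Mathlib

section
/- Let θ be a Borel probability measure on [0,∞), t ≥ 0, and let T_t♯θ denote the push-forward of θ by s ↦ s + t. Then for every s ≥ 0, TV_s(T_t♯θ) ≤ TV_s(θ). Consequently, if a sequence (θ^k) satisfies the long-term condition and (m_k) is any sequence of nonnegative reals, then (T_{m_k}♯θ^k) also satisfies the long-term condition. -/
open MeasureTheory Set Filter

/-- The `s`-total variation of a Borel measure `θ` on `[0,∞)`:
`TV_s(θ) = sup_{Q Borel ⊆ [0,∞)} |θ(Q) - θ(Q+s)|`. -/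
noncomputable def TV (θ : Measure ℝ) (s : ℝ) : ℝ :=
  ⨆ Q : {Q : Set ℝ // MeasurableSet Q ∧ Q ⊆ Ici 0},
    |(θ Q.1).toReal - (θ ((fun x => x + s) '' Q.1)).toReal|

/-- The long-term condition for a sequence of measures on `[0,∞)`. -/
def LTC (θ : ℕ → Measure ℝ) : Prop :=
  ∀ S > (0:ℝ), Tendsto (fun k => ⨆ s : Icc (0:ℝ) S, TV (θ k) s) atTop (nhds 0)

private instance : Nonempty {Q : Set ℝ // MeasurableSet Q ∧ Q ⊆ Ici 0} :=
  ⟨⟨∅, MeasurableSet.empty, empty_subset _⟩⟩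

private lemma img_eq (a : ℝ) (Q : Set ℝ) :
    (fun x => x + a) '' Q = (fun x => x - a) ⁻¹' Q := by
  ext x
  constructor
  · rintro ⟨q, hq, rfl⟩; simpa using hq
  · intro h; exact ⟨x - a, h, by ring⟩

private lemma img_meas {Q : Set ℝ} (a : ℝ) (hQ : MeasurableSet Q) :
    MeasurableSet ((fun x => x + a) '' Q) := by
  rw [img_eq]; exact hQ.preimage (measurable_id.sub_const a)

private lemma toReal_le_one (θ : Measure ℝ) [IsProbabilityMeasure θ] (Q : Set ℝ) :
    (θ Q).toReal ≤ 1 := by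
  have h := prob_le_one (μ := θ) (s := Q)
  have := ENNReal.toReal_mono (by simp) h
  simpa using this

private lemma term_le_one (θ : Measure ℝ) [IsProbabilityMeasure θ] (s : ℝ)
    (Q : {Q : Set ℝ // MeasurableSet Q ∧ Q ⊆ Ici 0}) :
    |(θ Q.1).toReal - (θ ((fun x => x + s) '' Q.1)).toReal| ≤ 1 := by
  have h1 := toReal_le_one θ Q.1
  have h2 := toReal_le_one θ ((fun x => x + s) '' Q.1)
  have h3 : (0:ℝ) ≤ (θ Q.1).toReal := ENNReal.toReal_nonneg
  have h4 : (0:ℝ) ≤ (θ ((fun x => x + s) '' Q.1)).toReal := ENNReal.toReal_nonneg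
  rw [abs_sub_le_iff]; constructor <;> linarith

private lemma tv_bdd (θ : Measure ℝ) [IsProbabilityMeasure θ] (s : ℝ) :
    BddAbove (Set.range fun Q : {Q : Set ℝ // MeasurableSet Q ∧ Q ⊆ Ici 0} =>
      |(θ Q.1).toReal - (θ ((fun x => x + s) '' Q.1)).toReal|) := by
  refine ⟨1, ?_⟩
  rintro x ⟨Q, rfl⟩
  exact term_le_one θ s Q

private lemma tv_nonneg (θ : Measure ℝ) (s : ℝ) : 0 ≤ TV θ s :=
  Real.iSup_nonneg fun _ => abs_nonneg _

private lemma tv_le_one (θ : Measure ℝ) [IsProbabilityMeasure θ] (s : ℝ) :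
    TV θ s ≤ 1 :=
  ciSup_le fun Q => term_le_one θ s Q

/-- Trimming by the support. -/
private lemma trim_eq (θ : Measure ℝ) (h0 : θ (Iio 0) = 0) (E : Set ℝ) :
    θ E = θ (E ∩ Ici 0) := by
  refine le_antisymm ?_ (measure_mono inter_subset_left)
  have hsub : E ⊆ (E ∩ Ici 0) ∪ Iio 0 := by
    intro x hx
    rcases le_or_gt 0 x with h | h
    · exact Or.inl ⟨hx, h⟩
    · exact Or.inr h
  calc θ E ≤ θ ((E ∩ Ici 0) ∪ Iio 0) := measure_mono hsub
    _ ≤ θ (E ∩ Ici 0) + θ (Iio 0) := measure_union_le _ _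
    _ = θ (E ∩ Ici 0) := by rw [h0, add_zero]

/-- The key lemma: pushing forward by a nonnegative shift does not increase `TV`. -/
private lemma tv_map_le (θ : Measure ℝ) [IsProbabilityMeasure θ] (h0 : θ (Iio 0) = 0)
    {t s : ℝ} (ht : 0 ≤ t) (hs : 0 ≤ s) :
    TV (Measure.map (fun x => x + t) θ) s ≤ TV θ s := by
  have mt : Measurable fun x : ℝ => x + t := measurable_id.add_const t
  refine ciSup_le ?_
  rintro ⟨Q, hQm, hQs⟩
  -- the relevant sets
  set A : Set ℝ := ((fun x => x + t) ⁻¹' Q) ∩ Ici 0 with hA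
  set A' : Set ℝ := (fun x => x + s) '' A with hA'
  set W : Set ℝ := ((fun x => x + t) ⁻¹' ((fun x => x + s) '' Q)) ∩ Ici 0 with hW
  have hAm : MeasurableSet A := (hQm.preimage mt).inter measurableSet_Ici
  have hA'm : MeasurableSet A' := img_meas s hAm
  have hAsub : A ⊆ Ici 0 := inter_subset_right
  have hA'sub : A' ⊆ Ici s := by
    rintro y ⟨x, hx, rfl⟩
    exact mem_Ici.mpr (le_add_of_nonneg_left (mem_Ici.mp hx.2))
  -- abbreviations for the real values
  set a : ℝ := (θ A).toReal with ha
  set b : ℝ := (θ A').toReal with hb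
  set c : ℝ := (θ W).toReal with hc
  set δ : ℝ := (θ (Ico 0 s)).toReal with hδ
  -- the map values
  have hmap1 : ((Measure.map (fun x => x + t) θ) Q).toReal = a := by
    rw [Measure.map_apply mt hQm, trim_eq θ h0]
  have hmap2 : ((Measure.map (fun x => x + t) θ) ((fun x => x + s) '' Q)).toReal = c := by
    rw [Measure.map_apply mt (img_meas s hQm), trim_eq θ h0]
  rw [hmap1, hmap2]
  -- b ≤ c
  have hbc : b ≤ c := by
    have hsub : A' ⊆ W := by
      rintro y ⟨x, ⟨hxQ, hx0⟩, rfl⟩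
      constructor
      · exact ⟨x + t, hxQ, by ring⟩
      · exact add_nonneg hx0 hs
    exact ENNReal.toReal_mono (measure_ne_top θ W) (measure_mono hsub)
  -- c ≤ b + δ
  have hcb : c ≤ b + δ := by
    have hsub : W ⊆ A' ∪ Ico 0 s := by
      rintro y ⟨⟨q, hqQ, hq⟩, hy0⟩
      have hq' : q + s = y + t := hq
      rcases le_or_gt s y with h | h
      · left
        refine ⟨y - s, ⟨?_, ?_⟩, by ring⟩
        · show y - s + t ∈ Q
          have : y - s + t = q := by linarith
          rwa [this]
        · have hy0' : (0:ℝ) ≤ y := hy0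
          exact mem_Ici.mpr (by linarith)
      · exact Or.inr ⟨hy0, h⟩
    have h1 : θ W ≤ θ A' + θ (Ico 0 s) :=
      le_trans (measure_mono hsub) (measure_union_le _ _)
    have h2 := ENNReal.toReal_mono
      (by simp [ENNReal.add_ne_top, measure_ne_top]) h1
    rwa [ENNReal.toReal_add (measure_ne_top θ A') (measure_ne_top θ (Ico 0 s))] at h2
  -- witness 1: A itself
  have hw1 : |a - b| ≤ TV θ s :=
    le_ciSup (tv_bdd θ s) (⟨A, hAm, hAsub⟩ :
      {Q : Set ℝ // MeasurableSet Q ∧ Q ⊆ Ici 0})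
  -- some measure computations for the complement witness
  have hIci0 : θ (Ici 0) = 1 := by
    have : (Iio (0:ℝ))ᶜ = Ici 0 := compl_Iio
    rw [← this, prob_compl_eq_one_sub measurableSet_Iio, h0, tsub_zero]
  have hIcis : (θ (Ici s)).toReal = 1 - δ := by
    have hset : Ici (0:ℝ) \ Ico 0 s = Ici s := by
      ext x
      simp only [mem_diff, mem_Ici, mem_Ico, not_and, not_lt]
      constructor
      · rintro ⟨h1, h2⟩; exact h2 h1
      · intro h; exact ⟨le_trans hs h, fun _ => h⟩
    have := measure_diff (Ico_subset_Ici_self : Ico (0:ℝ) s ⊆ Ici 0)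
      measurableSet_Ico.nullMeasurableSet (measure_ne_top θ _)
    rw [hset, hIci0] at this
    rw [this, ENNReal.toReal_sub_of_le (by rw [← hIci0]; exact measure_mono Ico_subset_Ici_self)
      (by simp)]
    simp [hδ]
  -- witness 2: Ici 0 \ A
  have hQc : (θ (Ici 0 \ A)).toReal = 1 - a := by
    have := measure_diff hAsub hAm.nullMeasurableSet (measure_ne_top θ A)
    rw [this, ENNReal.toReal_sub_of_le (measure_mono hAsub) (measure_ne_top θ _), hIci0]
    simp [ha]
  have hQc' : ((fun x => x + s) '' (Ici 0 \ A)) = Ici s \ A' := by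
    rw [image_diff (add_left_injective s), image_add_const_Ici, zero_add, hA']
  have hQcval : (θ ((fun x => x + s) '' (Ici 0 \ A))).toReal = (1 - δ) - b := by
    rw [hQc']
    have := measure_diff hA'sub hA'm.nullMeasurableSet (measure_ne_top θ A')
    rw [this, ENNReal.toReal_sub_of_le (measure_mono hA'sub) (measure_ne_top θ _), hIcis]
  have hw2 : |(1 - a) - ((1 - δ) - b)| ≤ TV θ s := by
    have := le_ciSup (tv_bdd θ s) (⟨Ici 0 \ A, measurableSet_Ici.diff hAm,
      diff_subset⟩ : {Q : Set ℝ // MeasurableSet Q ∧ Q ⊆ Ici 0})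
    simp only [hQc, hQcval] at this
    exact this
  -- conclude
  rcases le_total a c with h | h
  · have h1 : (1 - a) - ((1 - δ) - b) ≤ |(1 - a) - ((1 - δ) - b)| := le_abs_self _
    have : |a - c| = c - a := by rw [abs_of_nonpos (by linarith)]; ring
    linarith
  · have h1 : a - b ≤ |a - b| := le_abs_self _
    have : |a - c| = a - c := abs_of_nonneg (by linarith)
    linarith

theorem tv_pushforward_shift :
    (∀ (θ : Measure ℝ), IsProbabilityMeasure θ → θ (Iio 0) = 0 →
      ∀ t ≥ (0:ℝ), ∀ s ≥ (0:ℝ), TV (Measure.map (fun x => x + t) θ) s ≤ TV θ s) ∧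
    (∀ (θ : Measure ℝ), IsProbabilityMeasure θ → θ (Iio 0) = 0 →
      ∀ m ≥ (0:ℝ), ∀ s ≥ (0:ℝ),
        TV (Measure.map (fun x => x + m) θ) s ≤ TV θ s + (θ (Icc 0 s)).toReal) ∧
    (∀ (θ : ℕ → Measure ℝ), (∀ k, IsProbabilityMeasure (θ k)) →
      (∀ k, θ k (Iio 0) = 0) → LTC θ → ∀ m : ℕ → ℝ, (∀ k, 0 ≤ m k) →
        LTC (fun k => Measure.map (fun x => x + m k) (θ k))) := by
  refine ⟨?_, ?_, ?_⟩
  · intro θ hθ h0 t ht s hs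
    exact tv_map_le θ h0 ht hs
  · intro θ hθ h0 m hm s hs
    have h := tv_map_le θ h0 hm hs
    have : (0:ℝ) ≤ (θ (Icc 0 s)).toReal := ENNReal.toReal_nonneg
    linarith
  · intro θ hθ h0 hLTC m hm S hS
    have hne : Nonempty (Icc (0:ℝ) S) := ⟨⟨0, le_refl 0, le_of_lt hS⟩⟩
    have key : ∀ k, (⨆ s : Icc (0:ℝ) S, TV (Measure.map (fun x => x + m k) (θ k)) s)
        ≤ ⨆ s : Icc (0:ℝ) S, TV (θ k) s := by
      intro k
      haveI := hθ k
      refine ciSup_le fun s => ?_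
      have h1 : TV (Measure.map (fun x => x + m k) (θ k)) s ≤ TV (θ k) s :=
        tv_map_le (θ k) (h0 k) (hm k) s.2.1
      have h2 : TV (θ k) s ≤ ⨆ s : Icc (0:ℝ) S, TV (θ k) s := by
        refine le_ciSup (f := fun s : Icc (0:ℝ) S => TV (θ k) s) ⟨1, ?_⟩ s
        rintro x ⟨u, rfl⟩
        exact tv_le_one (θ k) u
      exact le_trans h1 h2
    have hnn : ∀ k, (0:ℝ) ≤
        ⨆ s : Icc (0:ℝ) S, TV (Measure.map (fun x => x + m k) (θ k)) s := by
      intro k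
      exact Real.iSup_nonneg fun s => tv_nonneg _ _
    exact tendsto_of_tendsto_of_tendsto_of_le_of_le tendsto_const_nhds
      (hLTC S hS) hnn key
end

section
/- (Key lower bound) Let 𝒰 be a nonempty set and for each u ∈ 𝒰 let h_u : [0,∞) → [0,1] be Borel measurable, with the shift-consistency property that for each u ∈ 𝒰 and T ≥ 0 there is u' ∈ 𝒰 with h_{u'}(s) = h_u(s+T) for all s ≥ 0 (i.e., the family of cost trajectories is shift-invariant, as for trajectories of a control system). For a probability measure ν on [0,∞), define V_ν = inf_{u∈𝒰} ∫ h_u dν, and for t ≥ 0 let T_t♯ν be the push-forward by s ↦ s+t. Let (θ^k) be a sequence of probability measures on [0,∞) satisfying the long-term condition. Then for every probability measure μ on [0,∞): inf_{t ≥ 0} V_{T_t♯μ} ≤ liminf_{k→∞} V_{θ^k}. -/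
/-!
Fix a control `u`. Averaging `V_{T_t♯μ} ≤ ∫ h_u(x + t) dμ(x)` against `θ^k(dt)` and applying Fubini
bounds the left-hand side by `∫ (∫ h_u(x + t) dθ^k(t)) dμ(x)`. By the layer-cake formula the inner
integral differs from `∫ h_u dθ^k` by at most `TV_x(θ^k)`, since the superlevel sets of
`h_u(x + ·)` are translates by `-x` of those of `h_u`. Splitting the outer integral at `S` gives
`inf_t V_{T_t♯μ} ≤ V_{θ^k} + sup_{[0,S]} TV(θ^k) + μ(S, ∞)`; now let `k → ∞`, then `S → ∞`.
-/

open MeasureTheory Set Filter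

section TV

variable (θ : Measure ℝ) [IsFiniteMeasure θ]

lemma abs_measureReal_sub_le_measureReal_univ (A B : Set ℝ) :
    |θ.real A - θ.real B| ≤ θ.real univ := by
  have hA := measureReal_mono (μ := θ) (subset_univ A)
  have hB := measureReal_mono (μ := θ) (subset_univ B)
  rw [abs_sub_le_iff]
  constructor <;> linarith [measureReal_nonneg (μ := θ) (s := A),
    measureReal_nonneg (μ := θ) (s := B)]

lemma abs_sub_le_TV (s : ℝ) {Q : Set ℝ} (hQ : MeasurableSet Q) (hQ0 : Q ⊆ Ici 0) :
    |θ.real Q - θ.real ((· + s) '' Q)| ≤ TV θ s :=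
  le_ciSup (f := fun Q : {Q : Set ℝ // MeasurableSet Q ∧ Q ⊆ Ici 0} =>
      |θ.real Q.1 - θ.real ((· + s) '' Q.1)|)
    ⟨θ.real univ, forall_mem_range.2 fun _ => abs_measureReal_sub_le_measureReal_univ θ _ _⟩
    ⟨Q, hQ, hQ0⟩

lemma TV_nonneg (s : ℝ) : 0 ≤ TV θ s :=
  (abs_nonneg _).trans (abs_sub_le_TV θ s MeasurableSet.empty (empty_subset _))

lemma TV_le_measureReal_univ (s : ℝ) : TV θ s ≤ θ.real univ :=
  Real.iSup_le (fun _ => abs_measureReal_sub_le_measureReal_univ θ _ _) measureReal_nonneg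

lemma TV_le_iSup_TV_Icc {S s : ℝ} (hs : s ∈ Icc 0 S) : TV θ s ≤ ⨆ s : Icc 0 S, TV θ s :=
  le_ciSup (f := fun s : Icc 0 S => TV θ s)
    ⟨θ.real univ, forall_mem_range.2 fun _ => TV_le_measureReal_univ θ _⟩ ⟨s, hs⟩

lemma measureReal_preimage_const_add_le (hθ : θ (Iio 0) = 0) (x : ℝ) {A : Set ℝ}
    (hA : MeasurableSet A) : θ.real ((x + ·) ⁻¹' A) ≤ θ.real A + TV θ x := by
  set R := Ici 0 ∩ (x + ·) ⁻¹' A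
  have hR : MeasurableSet R := measurableSet_Ici.inter (measurable_const_add x hA)
  have h_ae : θ.real ((x + ·) ⁻¹' A) = θ.real R := by
    have h_nonneg : Ici (0 : ℝ) =ᵐ[θ] univ := ae_eq_univ.2 (by rwa [compl_Ici])
    simpa [R] using measureReal_congr (h_nonneg.inter (ae_eq_refl ((x + ·) ⁻¹' A))).symm
  have h_image : (· + x) '' R ⊆ A := by
    rintro _ ⟨a, ⟨-, ha⟩, rfl⟩
    simpa only [mem_preimage, add_comm x] using ha
  have h_TV := (le_abs_self _).trans (abs_sub_le_TV θ x hR inter_subset_left)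
  have h_mono := measureReal_mono (μ := θ) h_image
  linarith

end TV

section UnitInterval

variable {α : Type*} [MeasurableSpace α] {f : α → ℝ}

lemma integrable_of_nonneg_of_le_one {μ : Measure α} [IsFiniteMeasure μ] (hf : Measurable f)
    (hf0 : 0 ≤ f) (hf1 : f ≤ 1) : Integrable f μ :=
  .of_bound hf.aestronglyMeasurable 1 <| ae_of_all _ fun a => by
    simpa [abs_of_nonneg (hf0 a)] using hf1 a

lemma integral_le_one_of_le_one {μ : Measure α} [IsProbabilityMeasure μ] (hf0 : 0 ≤ f)
    (hf1 : f ≤ 1) : ∫ a, f a ∂μ ≤ 1 :=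
  (le_abs_self _).trans <| by
    simpa using norm_integral_le_of_norm_le_const (μ := μ) (f := f) (C := 1) <|
      ae_of_all _ fun a => by rw [Real.norm_eq_abs, abs_of_nonneg (hf0 a)]; exact hf1 a

lemma integral_le_integral_add_of_measureReal_le_add {μ ν : Measure α} [IsFiniteMeasure μ]
    [IsFiniteMeasure ν] (hf : Measurable f) (hf0 : 0 ≤ f) (hf1 : f ≤ 1) {c : ℝ}
    (h : ∀ A, MeasurableSet A → μ.real A ≤ ν.real A + c) :
    ∫ a, f a ∂μ ≤ ∫ a, f a ∂ν + c := by
  have layer_cake (ρ : Measure α) [IsFiniteMeasure ρ] :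
      ∫ a, f a ∂ρ = ∫ t in Ioc 0 1, ρ.real {a | t ≤ f a} :=
    (integrable_of_nonneg_of_le_one hf hf0 hf1).integral_eq_integral_Ioc_meas_le
      (ae_of_all _ hf0) (ae_of_all _ hf1)
  have integrableOn (ρ : Measure α) [IsFiniteMeasure ρ] :
      IntegrableOn (fun t => ρ.real {a | t ≤ f a}) (Ioc 0 1) :=
    have anti : Antitone fun t => ρ.real {a | t ≤ f a} := fun _ _ hst =>
      measureReal_mono fun _ ha => hst.trans ha
    (anti.antitoneOn _ |>.integrableOn_isCompact isCompact_Icc).mono_set Ioc_subset_Icc_self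
  rw [layer_cake, layer_cake]
  calc ∫ t in Ioc 0 1, μ.real {a | t ≤ f a}
      ≤ ∫ t in Ioc 0 1, (ν.real {a | t ≤ f a} + c) :=
        setIntegral_mono_on (integrableOn μ) ((integrableOn ν).add (integrableOn_const (by simp)))
          measurableSet_Ioc fun t _ => h _ (measurableSet_le measurable_const hf)
    _ = (∫ t in Ioc 0 1, ν.real {a | t ≤ f a}) + c := by
        rw [integral_add (integrableOn ν) (integrableOn_const (by simp)), setIntegral_const]
        simp

end UnitInterval

section Shift

variable (θ μ : Measure ℝ) {F : ℝ → ℝ}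

lemma integral_comp_const_add_le_add_TV [IsFiniteMeasure θ] (hθ : θ (Iio 0) = 0)
    (hF : Measurable F) (hF0 : 0 ≤ F) (hF1 : F ≤ 1) (x : ℝ) :
    ∫ t, F (x + t) ∂θ ≤ ∫ t, F t ∂θ + TV θ x := by
  rw [← integral_map (measurable_const_add x).aemeasurable hF.aestronglyMeasurable]
  refine integral_le_integral_add_of_measureReal_le_add hF hF0 hF1 fun A hA => ?_
  rw [map_measureReal_apply (measurable_const_add x) hA]
  exact measureReal_preimage_const_add_le θ hθ x hA

lemma integral_integral_comp_const_add_le [IsProbabilityMeasure θ] [IsProbabilityMeasure μ]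
    (hθ : θ (Iio 0) = 0) (hμ : μ (Iio 0) = 0) (hF : Measurable F) (hF0 : 0 ≤ F) (hF1 : F ≤ 1)
    {S M : ℝ} (hS : 0 ≤ S) (hM : ∀ s ∈ Icc 0 S, TV θ s ≤ M) :
    ∫ x, ∫ t, F (x + t) ∂θ ∂μ ≤ ∫ t, F t ∂θ + M + μ.real (Ioi S) := by
  have hM0 : 0 ≤ M := (TV_nonneg θ 0).trans (hM 0 ⟨le_rfl, hS⟩)
  have h_pointwise : ∀ x, 0 ≤ x →
      ∫ t, F (x + t) ∂θ ≤ ∫ t, F t ∂θ + M + (Ioi S).indicator 1 x := by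
    intro x hx
    by_cases hxS : x ≤ S
    · rw [indicator_of_notMem (s := Ioi S) (not_lt.2 hxS), add_zero]
      linarith [integral_comp_const_add_le_add_TV θ hθ hF hF0 hF1 x, hM x ⟨hx, hxS⟩]
    · rw [indicator_of_mem (s := Ioi S) (not_le.1 hxS), Pi.one_apply]
      linarith [integral_nonneg (μ := θ) hF0,
        integral_le_one_of_le_one (μ := θ) (fun t => hF0 (x + t)) fun t => hF1 (x + t)]
  have h_nonneg : ∀ᵐ x ∂μ, 0 ≤ x := by
    filter_upwards [measure_eq_zero_iff_ae_notMem.1 hμ] with x hx using not_lt.1 hx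
  have h_tail : Integrable ((Ioi S).indicator (1 : ℝ → ℝ)) μ :=
    (integrable_const 1).indicator measurableSet_Ioi
  calc ∫ x, ∫ t, F (x + t) ∂θ ∂μ
      ≤ ∫ x, (∫ t, F t ∂θ + M + (Ioi S).indicator 1 x) ∂μ := by
        refine integral_mono_ae ?_ ((integrable_const _).add h_tail) ?_
        · exact (integrable_of_nonneg_of_le_one (μ := μ.prod θ)
            (hF.comp (measurable_fst.add measurable_snd)) (fun _ => hF0 _)
            fun _ => hF1 _).integral_prod_left
        · filter_upwards [h_nonneg] with x hx using h_pointwise x hx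
    _ = ∫ t, F t ∂θ + M + μ.real (Ioi S) := by
        rw [integral_add (integrable_const _) h_tail, integral_indicator_one measurableSet_Ioi]
        simp

end Shift

lemma iInf_integral_le_one {U : Type*} [Nonempty U] {h : U → ℝ → ℝ} (h0 : ∀ u s, 0 ≤ h u s)
    (h1 : ∀ u s, h u s ≤ 1) (ν : Measure ℝ) [IsProbabilityMeasure ν] :
    ⨅ u, ∫ s, h u s ∂ν ≤ 1 :=
  (ciInf_le ⟨0, forall_mem_range.2 fun u => integral_nonneg (h0 u)⟩ (Classical.arbitrary U)).trans
    (integral_le_one_of_le_one (h0 _) (h1 _))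

lemma iInf_iInf_integral_map_add_le {U : Type*} [Nonempty U] {h : U → ℝ → ℝ}
    (hmeas : ∀ u, Measurable (h u)) (h0 : ∀ u s, 0 ≤ h u s) (h1 : ∀ u s, h u s ≤ 1)
    (θ μ : Measure ℝ) [IsProbabilityMeasure θ] [IsProbabilityMeasure μ] (hθ : θ (Iio 0) = 0)
    (hμ : μ (Iio 0) = 0) {S M : ℝ} (hS : 0 ≤ S) (hM : ∀ s ∈ Icc 0 S, TV θ s ≤ M) :
    ⨅ t : Ici (0 : ℝ), ⨅ u, ∫ s, h u s ∂(μ.map (· + (t : ℝ))) ≤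
      (⨅ u, ∫ s, h u s ∂θ) + M + μ.real (Ioi S) := by
  set c := ⨅ t : Ici (0 : ℝ), ⨅ u, ∫ s, h u s ∂(μ.map (· + (t : ℝ)))
  suffices ∀ u, c - (M + μ.real (Ioi S)) ≤ ∫ s, h u s ∂θ by
    linarith [le_ciInf this]
  intro u
  have h_int : Integrable (Function.uncurry fun t x => h u (x + t)) (θ.prod μ) :=
    integrable_of_nonneg_of_le_one ((hmeas u).comp (measurable_snd.add measurable_fst))
      (fun _ => h0 u _) fun _ => h1 u _
  have h_le_shifted : ∀ᵐ t ∂θ, c ≤ ∫ x, h u (x + t) ∂μ := by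
    filter_upwards [measure_eq_zero_iff_ae_notMem.1 hθ] with t ht
    rw [← integral_map (measurable_add_const t).aemeasurable (hmeas u).aestronglyMeasurable]
    refine (ciInf_le ⟨0, forall_mem_range.2 fun _ => ?_⟩ ⟨t, show 0 ≤ t from not_lt.1 ht⟩).trans
      (ciInf_le ⟨0, forall_mem_range.2 fun u => integral_nonneg (h0 u)⟩ u)
    exact Real.iInf_nonneg fun u => integral_nonneg (h0 u)
  have h_avg : c ≤ ∫ t, ∫ x, h u (x + t) ∂μ ∂θ := by
    simpa using integral_mono_ae (integrable_const c) h_int.integral_prod_left h_le_shifted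
  rw [integral_integral_swap h_int] at h_avg
  linarith [integral_integral_comp_const_add_le θ μ hθ hμ (hmeas u) (h0 u) (h1 u) hS hM]

lemma tendsto_measureReal_Ioi_atTop (μ : Measure ℝ) [IsFiniteMeasure μ] :
    Tendsto (fun S => μ.real (Ioi S)) atTop (nhds 0) := by
  have h_empty : ⋂ S : ℝ, Ioi S = ∅ :=
    eq_empty_iff_forall_notMem.2 fun x hx => lt_irrefl x (mem_iInter.1 hx x)
  have h_lim := tendsto_measure_iInter_atTop (μ := μ)
    (fun S => measurableSet_Ioi.nullMeasurableSet) (fun _ _ hST => Ioi_subset_Ioi hST)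
    ⟨0, measure_ne_top μ _⟩
  rw [h_empty, measure_empty] at h_lim
  exact (ENNReal.tendsto_toReal ENNReal.zero_ne_top).comp h_lim

lemma le_liminf_of_le_add_of_tendsto_zero {ι : Type*} {l : Filter ι} [l.NeBot] {a b : ι → ℝ}
    {c : ℝ} (ha : IsBoundedUnder (· ≤ ·) l a) (hb : Tendsto b l (nhds 0))
    (h : ∀ i, c ≤ a i + b i) : c ≤ liminf a l :=
  le_of_forall_sub_le fun ε hε => le_liminf_of_le ha.isCoboundedUnder_ge <|
    (hb.eventually (gt_mem_nhds hε)).mono fun i hi => by linarith [h i]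

theorem key_lower_bound_general {U : Type*} [Nonempty U]
    (h : U → ℝ → ℝ) (hmeas : ∀ u, Measurable (h u))
    (h0 : ∀ u s, 0 ≤ h u s) (h1 : ∀ u s, h u s ≤ 1)
    (V : Measure ℝ → ℝ) (hV : ∀ ν, V ν = ⨅ u, ∫ s, h u s ∂ν)
    (θ : ℕ → Measure ℝ) (hprob : ∀ k, IsProbabilityMeasure (θ k))
    (hsupp : ∀ k, θ k (Iio 0) = 0) (hltc : LTC θ)
    (μ : Measure ℝ) [IsProbabilityMeasure μ] (hμsupp : μ (Iio 0) = 0) :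
    ⨅ t : Ici (0:ℝ), V (Measure.map (fun x => x + (t:ℝ)) μ) ≤
      Filter.liminf (fun k => V (θ k)) atTop := by
  obtain rfl : V = fun ν => ⨅ u, ∫ s, h u s ∂ν := funext hV
  dsimp only
  have h_tail := (tendsto_measureReal_Ioi_atTop μ).const_add
    (liminf (fun k => ⨅ u, ∫ s, h u s ∂θ k) atTop)
  rw [add_zero] at h_tail
  refine ge_of_tendsto h_tail ((eventually_gt_atTop (0 : ℝ)).mono fun S hS => ?_)
  rw [← sub_le_iff_le_add]
  refine le_liminf_of_le_add_of_tendsto_zero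
    (isBoundedUnder_of ⟨1, fun k => iInf_integral_le_one h0 h1 (θ k)⟩) (hltc S hS) fun k => ?_
  linarith [iInf_iInf_integral_map_add_le hmeas h0 h1 (θ k) μ (hsupp k) hμsupp hS.le
    fun s hs => TV_le_iSup_TV_Icc (θ k) hs]

theorem key_lower_bound {U : Type*} [Nonempty U]
    (h : U → ℝ → ℝ) (hmeas : ∀ u, Measurable (h u))
    (h0 : ∀ u s, 0 ≤ h u s) (h1 : ∀ u s, h u s ≤ 1)
    (hshift : ∀ (u : U) (T : ℝ), 0 ≤ T → ∃ u' : U, ∀ s ≥ (0:ℝ), h u' s = h u (s + T))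
    (V : Measure ℝ → ℝ) (hV : ∀ ν, V ν = ⨅ u, ∫ s, h u s ∂ν)
    (θ : ℕ → Measure ℝ) (hprob : ∀ k, IsProbabilityMeasure (θ k))
    (hsupp : ∀ k, θ k (Iio 0) = 0) (hltc : LTC θ)
    (μ : Measure ℝ) [IsProbabilityMeasure μ] (hμsupp : μ (Iio 0) = 0) :
    ⨅ t : Ici (0:ℝ), V (Measure.map (fun x => x + (t:ℝ)) μ) ≤
      Filter.liminf (fun k => V (θ k)) atTop :=
  key_lower_bound_general h hmeas h0 h1 V hV θ hprob hsupp hltc μ hμsupp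
end
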